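/- (Soundness for stable logic) If a formula φ is E′-valid, then φ belongs to stable logic. -/

import Mathlib

/- Formalization of Lorenzen dialogue games, following Felscher's presentation.

   Propositional formulas are built from atoms using ¬, ∧, ∨, →.  A dialogue
   for a formula φ is a sequence of moves beginning with Proponent (P)
   asserting φ at position 0, with O moving at odd positions and P at even
   positions.  Each later move attacks or defends an earlier move of the other
   player, according to the particle rules.  Structural rules (D10, D11, D12,
   D13, E, and the variants D10*, D10′) constrain dialogues further.  P wins
   if P made the last move and no moves are available to O; φ is S-valid if P
   has an S-winning strategy for φ. -/

namespace LorenzenDialogues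

/-- Propositional formulas: atoms, ¬, ∧, ∨, →. -/
inductive Formula : Type
  | atom : ℕ → Formula
  | neg  : Formula → Formula
  | and  : Formula → Formula → Formula
  | or   : Formula → Formula → Formula
  | imp  : Formula → Formula → Formula
deriving DecidableEq

/-- Statements: formulas together with the symbolic attacks `?`, `∧_L`, `∧_R`. -/
inductive Statement : Type
  | form  : Formula → Statement
  | qmark : Statement
  | andL  : Statement
  | andR  : Statement
deriving DecidableEq

/-- Particle rules, attack part: which statements attack which formulas. -/
inductive Attacks : Statement → Formula → Prop
  | andL (a b : Formula) : Attacks .andL (.and a b)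
  | andR (a b : Formula) : Attacks .andR (.and a b)
  | qmark (a b : Formula) : Attacks .qmark (.or a b)
  | imp (a b : Formula) : Attacks (.form a) (.imp a b)
  | neg (a : Formula) : Attacks (.form a) (.neg a)

/-- Particle rules, defense part: `Defends χ a s` means `s` is a permitted
    defense of the formula `χ` against the attack `a`.  (A negation admits
    no defense.) -/
inductive Defends : Formula → Statement → Statement → Prop
  | andL (a b : Formula) : Defends (.and a b) .andL (.form a)
  | andR (a b : Formula) : Defends (.and a b) .andR (.form b)
  | orL (a b : Formula) : Defends (.or a b) .qmark (.form a)
  | orR (a b : Formula) : Defends (.or a b) .qmark (.form b)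
  | imp (a b : Formula) : Defends (.imp a b) (.form a) (.form b)

/-- A move: a statement, a flag recording whether it is an attack (`true`)
    or a defense (`false`), and the position of the earlier move it attacks,
    resp. the earlier attack it defends against. -/
structure Move : Type where
  statement : Statement
  isAttack : Bool
  ref : ℕ
deriving DecidableEq

/-- A dialogue: the initial formula asserted by P at position 0, followed by
    the list of later moves (the move at list index `i` occupies position
    `i + 1`; O moves at odd positions, P at even positions). -/
structure Dialogue : Type where
  initial : Formula
  moves : List Move

/-- The statement asserted at position `n` (if any). -/
def Dialogue.stmtAt (d : Dialogue) (n : ℕ) : Option Statement :=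
  if n = 0 then some (.form d.initial) else (d.moves[n - 1]?).map Move.statement

/-- The move at position `n ≥ 1` (if any); position 0 is the initial assertion,
    not a move. -/
def Dialogue.moveAt (d : Dialogue) (n : ℕ) : Option Move :=
  if n = 0 then none else d.moves[n - 1]?

/-- The move `m`, played at position `n ≥ 1`, is permitted by the particle
    rules: it refers to an earlier position of the other player; if it is an
    attack, it attacks a formula asserted there, and if it is a defense, it
    responds to an attack played there, as the particle rules prescribe. -/
def MoveOK (d : Dialogue) (n : ℕ) (m : Move) : Prop :=
  m.ref < n ∧ m.ref % 2 ≠ n % 2 ∧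
    (m.isAttack = true →
      ∃ ψ, d.stmtAt m.ref = some (.form ψ) ∧ Attacks m.statement ψ) ∧
    (m.isAttack = false →
      ∃ a χ, d.moveAt m.ref = some a ∧ a.isAttack = true ∧
        d.stmtAt a.ref = some (.form χ) ∧ Defends χ a.statement m.statement)

/-- The dialogue adheres to the particle rules (every move is legal). -/
def ParticleOK (d : Dialogue) : Prop :=
  ∀ i m, d.moves[i]? = some m → MoveOK d (i + 1) m

/-- Position `n` carries a defense of the attack made at position `r`. -/
def IsDefenseOf (d : Dialogue) (n r : ℕ) : Prop :=
  ∃ m, d.moveAt n = some m ∧ m.isAttack = false ∧ m.ref = r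

/-- Position `n` carries an attack on the assertion made at position `r`. -/
def IsAttackOn (d : Dialogue) (n r : ℕ) : Prop :=
  ∃ m, d.moveAt n = some m ∧ m.isAttack = true ∧ m.ref = r

/-- Position `n` carries an attack. -/
def IsAttackPos (d : Dialogue) (n : ℕ) : Prop :=
  ∃ m, d.moveAt n = some m ∧ m.isAttack = true

/-- The attack at position `r` is still open (no defense against it has yet
    been played) before position `k`. -/
def OpenAt (d : Dialogue) (r k : ℕ) : Prop :=
  IsAttackPos d r ∧ ¬ ∃ j, j < k ∧ IsDefenseOf d j r

/-- (D10) P may assert an atomic formula only after it has been asserted by O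
    before. -/
def D10 (d : Dialogue) : Prop :=
  ∀ n p, n % 2 = 0 → d.stmtAt n = some (.form (.atom p)) →
    ∃ j, j < n ∧ j % 2 = 1 ∧ d.stmtAt j = some (.form (.atom p))

/-- (D10*) P may assert an atom `p` only if O has asserted `p` or `¬p`
    before. -/
def D10star (d : Dialogue) : Prop :=
  ∀ n p, n % 2 = 0 → d.stmtAt n = some (.form (.atom p)) →
    ∃ j, j < n ∧ j % 2 = 1 ∧
      (d.stmtAt j = some (.form (.atom p)) ∨
        d.stmtAt j = some (.form (.neg (.atom p))))

/-- (D10′) P may assert an atom `p` only if O has asserted `p` or `¬¬p`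
    before. -/
def D10prime (d : Dialogue) : Prop :=
  ∀ n p, n % 2 = 0 → d.stmtAt n = some (.form (.atom p)) →
    ∃ j, j < n ∧ j % 2 = 1 ∧
      (d.stmtAt j = some (.form (.atom p)) ∨
        d.stmtAt j = some (.form (.neg (.neg (.atom p)))))

/-- (D11) When defending, only the most recent open attack may be responded
    to: the attack defended against is open, and no strictly more recent open
    attack (against the same player) exists. -/
def D11 (d : Dialogue) : Prop :=
  ∀ n r, IsDefenseOf d n r →
    OpenAt d r n ∧ ¬ ∃ r', r < r' ∧ r' < n ∧ r' % 2 = r % 2 ∧ OpenAt d r' n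

/-- (D12) An attack may be answered at most once. -/
def D12 (d : Dialogue) : Prop :=
  ∀ n₁ n₂ r, IsDefenseOf d n₁ r → IsDefenseOf d n₂ r → n₁ = n₂

/-- (D13) A P-assertion (made at an even position) may be attacked at most
    once. -/
def D13 (d : Dialogue) : Prop :=
  ∀ n₁ n₂ r, r % 2 = 0 → IsAttackOn d n₁ r → IsAttackOn d n₂ r → n₁ = n₂

/-- (E) O can react only upon the immediately preceding P-statement. -/
def ERule (d : Dialogue) : Prop :=
  ∀ n m, n % 2 = 1 → d.moveAt n = some m → m.ref = n - 1

/-- A ruleset is a set of structural rules, i.e. a predicate on dialogues. -/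
def Ruleset := Dialogue → Prop

/-- Ruleset D = {D10, D11, D12, D13}. -/
def rulesetD : Ruleset := fun d => D10 d ∧ D11 d ∧ D12 d ∧ D13 d

/-- Ruleset E = D ∪ {E}. -/
def rulesetE : Ruleset := fun d => rulesetD d ∧ ERule d

/-- Ruleset CL = E − {D11, D12} = {D10, D13, E}. -/
def rulesetCL : Ruleset := fun d => D10 d ∧ D13 d ∧ ERule d

/-- Ruleset N = D − {D11, D12} = {D10, D13}. -/
def rulesetN : Ruleset := fun d => D10 d ∧ D13 d

/-- Ruleset E* = {D10*, D11, D12, D13, E}. -/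
def rulesetEstar : Ruleset :=
  fun d => D10star d ∧ D11 d ∧ D12 d ∧ D13 d ∧ ERule d

/-- Ruleset E′ = {D10′, D11, D12, D13, E}. -/
def rulesetEprime : Ruleset :=
  fun d => D10prime d ∧ D11 d ∧ D12 d ∧ D13 d ∧ ERule d

/-- An S-dialogue: a dialogue adhering to the particle rules and to the
    structural rules S. -/
def Legal (S : Ruleset) (d : Dialogue) : Prop := ParticleOK d ∧ S d

/-- Extend a dialogue by one move. -/
def Dialogue.extend (d : Dialogue) (m : Move) : Dialogue :=
  ⟨d.initial, d.moves ++ [m]⟩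

/-- The position about to be played. -/
def nextPos (d : Dialogue) : ℕ := d.moves.length + 1

/-- It is P's turn (the next position is even). -/
def PTurn (d : Dialogue) : Prop := nextPos d % 2 = 0

/-- The move `m` legally extends the S-dialogue `d`. -/
def LegalExt (S : Ruleset) (d : Dialogue) (m : Move) : Prop :=
  Legal S (d.extend m)

/-- `PWinningC S C d` holds when P, moving under the additional constraint
    `C` on P's own choices, has a winning strategy in the S-dialogue game
    continuing the dialogue `d`: at P's turn, P has a legal move (satisfying
    `C`) after which P is still winning; at O's turn, every legal O-move
    leads to a position where P is winning (in particular, if no O-move is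
    available, P has won: P made the last move and O cannot move). -/
inductive PWinningC (S : Ruleset) (C : Dialogue → Move → Prop) : Dialogue → Prop
  | pMove (d : Dialogue) (m : Move) (hturn : PTurn d)
      (hm : LegalExt S d m) (hC : C d m)
      (h : PWinningC S C (d.extend m)) : PWinningC S C d
  | oMoves (d : Dialogue) (hturn : ¬ PTurn d)
      (h : ∀ m, LegalExt S d m → PWinningC S C (d.extend m)) :
      PWinningC S C d

/-- P has a winning strategy continuing the S-dialogue `d`. -/
def PWinning (S : Ruleset) (d : Dialogue) : Prop :=
  PWinningC S (fun _ _ => True) d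

/-- `valid S φ` (written `⊨_S φ`): the opening assertion of φ is itself a
    legal S-dialogue and P has an S-winning strategy for φ. -/
def valid (S : Ruleset) (φ : Formula) : Prop :=
  Legal S ⟨φ, []⟩ ∧ PWinning S ⟨φ, []⟩

/-- Derivability in intuitionistic propositional logic (a Hilbert-style
    axiomatization with modus ponens). -/
inductive IProv : Formula → Prop
  | k (a b : Formula) : IProv (.imp a (.imp b a))
  | s (a b c : Formula) :
      IProv (.imp (.imp a (.imp b c)) (.imp (.imp a b) (.imp a c)))
  | andE1 (a b : Formula) : IProv (.imp (.and a b) a)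
  | andE2 (a b : Formula) : IProv (.imp (.and a b) b)
  | andI (a b : Formula) : IProv (.imp a (.imp b (.and a b)))
  | orI1 (a b : Formula) : IProv (.imp a (.or a b))
  | orI2 (a b : Formula) : IProv (.imp b (.or a b))
  | orE (a b c : Formula) :
      IProv (.imp (.imp a c) (.imp (.imp b c) (.imp (.or a b) c)))
  | negI (a b : Formula) :
      IProv (.imp (.imp a b) (.imp (.imp a (.neg b)) (.neg a)))
  | negE (a b : Formula) : IProv (.imp (.neg a) (.imp a b))
  | mp (a b : Formula) : IProv (.imp a b) → IProv a → IProv b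

/-- The stability principle ¬¬p → p for the atom `p`. -/
def stab (p : ℕ) : Formula := .imp (.neg (.neg (.atom p))) (.atom p)

/-- Stable logic: intuitionistic propositional logic plus all instances of
    the stability scheme ¬¬p → p for atoms p, closed under modus ponens. -/
inductive StableProv : Formula → Prop
  | intuit (a : Formula) : IProv a → StableProv a
  | stab (p : ℕ) : StableProv (stab p)
  | mp (a b : Formula) : StableProv (.imp a b) → StableProv a → StableProv b

/-- Boolean evaluation of a formula under a valuation of its atoms. -/
def Formula.eval (v : ℕ → Bool) : Formula → Bool
  | .atom p => v p
  | .neg a => !(a.eval v)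
  | .and a b => a.eval v && b.eval v
  | .or a b => a.eval v || b.eval v
  | .imp a b => !(a.eval v) || b.eval v

/-- A classical tautology: true under every Boolean valuation. -/
def Tautology (φ : Formula) : Prop := ∀ v, φ.eval v = true

/-- Uniform substitution of formulas for atoms, applied homomorphically. -/
def Formula.subst (σ : ℕ → Formula) : Formula → Formula
  | .atom p => σ p
  | .neg a => .neg (a.subst σ)
  | .and a b => .and (a.subst σ) (b.subst σ)
  | .or a b => .or (a.subst σ) (b.subst σ)
  | .imp a b => .imp (a.subst σ) (b.subst σ)

/-- The atoms occurring in a formula. -/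
def Formula.atoms : Formula → List ℕ
  | .atom p => [p]
  | .neg a => a.atoms
  | .and a b => a.atoms ++ b.atoms
  | .or a b => a.atoms ++ b.atoms
  | .imp a b => a.atoms ++ b.atoms

/-- Conjunction of a nonempty list of formulas. -/
def conjList (f : Formula) : List Formula → Formula
  | [] => f
  | g :: gs => .and f (conjList g gs)

/-- The conjunction (¬¬p → p) ∧ … of stability instances for the atoms
    `p :: ps`. -/
def stabConj (p : ℕ) (ps : List ℕ) : Formula :=
  conjList (stab p) (ps.map stab)

/-! By induction on P's winning strategy: whenever P is to move, the goal of the latest open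
O-attack on P (the conjunct, disjunction, consequent or falsum that P owes) follows in stable
logic from the formulas O has asserted so far. The particle rules match natural deduction: a
P-defense is an introduction rule, and a P-attack on one of O's concessions is an elimination
rule, since by rule (E), O must reply at once and each possible reply leads to a position P still
wins. An atom P asserts was conceded by O either outright or as `¬¬p` (rule D10′), and the
latter is exactly where stability `¬¬p → p` is used. At the opening assertion O has conceded
nothing, so `φ` itself is derivable. -/

def falsum : Formula := .neg (.imp (.atom 0) (.atom 0))

inductive StableDeriv (Γ : Set Formula) : Formula → Prop
  | hyp {a : Formula} : a ∈ Γ → StableDeriv Γ a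
  | ax {a : Formula} : StableProv a → StableDeriv Γ a
  | mp {a b : Formula} : StableDeriv Γ (.imp a b) → StableDeriv Γ a → StableDeriv Γ b

namespace StableDeriv

variable {Γ : Set Formula} {a b g : Formula}

theorem of_iProv (h : IProv a) : StableDeriv Γ a := .ax (.intuit _ h)

theorem imp_self : StableDeriv Γ (.imp a a) :=
  .mp (.mp (of_iProv (.s a (.imp a a) a)) (of_iProv (.k a (.imp a a)))) (of_iProv (.k a a))

theorem imp_const (h : StableDeriv Γ b) : StableDeriv Γ (.imp a b) := .mp (of_iProv (.k b a)) h

theorem imp_intro (h : StableDeriv (insert a Γ) b) : StableDeriv Γ (.imp a b) := by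
  induction h with
  | hyp hx =>
    rcases hx with rfl | hx
    · exact imp_self
    · exact imp_const (.hyp hx)
  | ax hx => exact imp_const (.ax hx)
  | mp _ _ ih₁ ih₂ => exact .mp (.mp (of_iProv (.s a _ _)) ih₁) ih₂

theorem cut (h₁ : StableDeriv Γ a) (h₂ : StableDeriv (insert a Γ) g) : StableDeriv Γ g :=
  .mp (imp_intro h₂) h₁

theorem and_intro (h₁ : StableDeriv Γ a) (h₂ : StableDeriv Γ b) : StableDeriv Γ (.and a b) :=
  .mp (.mp (of_iProv (.andI a b)) h₁) h₂

theorem and_left (h : StableDeriv Γ (.and a b)) : StableDeriv Γ a :=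
  .mp (of_iProv (.andE1 a b)) h

theorem and_right (h : StableDeriv Γ (.and a b)) : StableDeriv Γ b :=
  .mp (of_iProv (.andE2 a b)) h

theorem or_inl (h : StableDeriv Γ a) : StableDeriv Γ (.or a b) := .mp (of_iProv (.orI1 a b)) h

theorem or_inr (h : StableDeriv Γ b) : StableDeriv Γ (.or a b) := .mp (of_iProv (.orI2 a b)) h

theorem or_elim (h : StableDeriv Γ (.or a b)) (h₁ : StableDeriv (insert a Γ) g)
    (h₂ : StableDeriv (insert b Γ) g) : StableDeriv Γ g :=
  .mp (.mp (.mp (of_iProv (.orE a b g)) (imp_intro h₁)) (imp_intro h₂)) h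

theorem neg_intro (h : StableDeriv (insert a Γ) falsum) : StableDeriv Γ (.neg a) :=
  .mp (.mp (of_iProv (.negI a _)) (imp_const imp_self)) (imp_intro h)

theorem absurd (h₁ : StableDeriv Γ (.neg a)) (h₂ : StableDeriv Γ a) : StableDeriv Γ g :=
  .mp (.mp (of_iProv (.negE a g)) h₁) h₂

theorem stab {p : ℕ} (h : StableDeriv Γ (.neg (.neg (.atom p)))) : StableDeriv Γ (.atom p) :=
  .mp (.ax (.stab p)) h

theorem stableProv_of_empty (h : StableDeriv ∅ a) : StableProv a := by
  induction h with
  | hyp hx => exact hx.elim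
  | ax hx => exact hx
  | mp _ _ ih₁ ih₂ => exact .mp _ _ ih₁ ih₂

end StableDeriv

/-- The formula P has to establish once its assertion `χ` is attacked by `s`. For a
disjunction it is the disjunction itself, as P may defend with either disjunct; a negation
cannot be defended, so P can only win by deriving `falsum`. -/
def attackGoal : Formula → Statement → Option Formula
  | .and a _, .andL => some a
  | .and _ b, .andR => some b
  | .or a b, .qmark => some (.or a b)
  | .imp _ b, .form _ => some b
  | .neg _, .form _ => some falsum
  | _, _ => none

section ParticleRules

variable {Γ : Set Formula} {χ ψ g : Formula} {s t : Statement}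

theorem StableDeriv.of_attackGoal (hatom : ∀ p, ψ = .atom p → StableDeriv Γ ψ)
    (h : ∀ s g, Attacks s ψ → attackGoal ψ s = some g →
      StableDeriv ({χ | s = .form χ} ∪ Γ) g) :
    StableDeriv Γ ψ := by
  cases ψ with
  | atom p => exact hatom p rfl
  | and a b =>
    exact .and_intro (by simpa using h _ _ (.andL a b) rfl) (by simpa using h _ _ (.andR a b) rfl)
  | or a b => simpa using h _ _ (.qmark a b) rfl
  | imp a b => exact .imp_intro (by simpa using h _ _ (.imp a b) rfl)
  | neg a => exact .neg_intro (by simpa using h _ _ (.neg a) rfl)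

theorem StableDeriv.attackGoal_of_defends (hd : Defends χ s t) (hg : attackGoal χ s = some g)
    (ht : ∀ ψ, t = .form ψ → StableDeriv Γ ψ) : StableDeriv Γ g := by
  cases hd <;> simp only [attackGoal, Option.some.injEq] at hg <;> subst hg
  · exact ht _ rfl
  · exact ht _ rfl
  · exact .or_inl (ht _ rfl)
  · exact .or_inr (ht _ rfl)
  · exact ht _ rfl

theorem StableDeriv.of_attack_on_mem (hχ : χ ∈ Γ) (hs : Attacks s χ)
    (hassert : ∀ ψ, s = .form ψ → StableDeriv Γ ψ)
    (hdef : ∀ b, Defends χ s (.form b) → StableDeriv (insert b Γ) g) : StableDeriv Γ g := by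
  cases hs with
  | andL a b => exact .cut (.and_left (.hyp hχ)) (hdef a (.andL a b))
  | andR a b => exact .cut (.and_right (.hyp hχ)) (hdef b (.andR a b))
  | qmark a b => exact .or_elim (.hyp hχ) (hdef a (.orL a b)) (hdef b (.orR a b))
  | imp a b => exact .cut (.mp (.hyp hχ) (hassert a rfl)) (hdef b (.imp a b))
  | neg a => exact .absurd (.hyp hχ) (hassert a rfl)

end ParticleRules

theorem _root_.List.getElem?_append_singleton {α : Type*} {l : List α} {a : α} {i : ℕ} :
    (l ++ [a])[i]? = if i = l.length then some a else l[i]? := by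
  rw [List.getElem?_append, List.getElem?_singleton]
  split_ifs <;> first | rfl | omega | simp_all

section Positions

variable {d : Dialogue} {m mm : Move} {j k n r : ℕ}

theorem nextPos_extend : nextPos (d.extend m) = nextPos d + 1 := by
  simp [nextPos, Dialogue.extend]

theorem pTurn_extend : PTurn (d.extend m) ↔ ¬ PTurn d := by
  unfold PTurn
  rw [nextPos_extend]
  omega

theorem not_pTurn_extend : ¬ PTurn (d.extend m) ↔ PTurn d := by
  rw [pTurn_extend, not_not]

theorem Dialogue.moveAt_eq_none (h : nextPos d ≤ k) : d.moveAt k = none := by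
  unfold Dialogue.moveAt nextPos at *
  split_ifs
  · rfl
  · exact List.getElem?_eq_none (by omega)

theorem Dialogue.stmtAt_eq_none (h : nextPos d ≤ k) : d.stmtAt k = none := by
  unfold Dialogue.stmtAt nextPos at *
  split_ifs
  · omega
  · simp [List.getElem?_eq_none (by omega : d.moves.length ≤ k - 1)]

theorem Dialogue.lt_nextPos_of_moveAt (h : d.moveAt k = some m) : k < nextPos d := by
  by_contra hk
  simp [d.moveAt_eq_none (not_lt.mp hk)] at h

theorem Dialogue.lt_nextPos_of_stmtAt {s : Statement} (h : d.stmtAt k = some s) :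
    k < nextPos d := by
  by_contra hk
  simp [d.stmtAt_eq_none (not_lt.mp hk)] at h

theorem Dialogue.moveAt_extend :
    (d.extend m).moveAt k = if k = nextPos d then some m else d.moveAt k := by
  unfold Dialogue.moveAt Dialogue.extend nextPos
  simp only [List.getElem?_append_singleton]
  split_ifs <;> first | rfl | omega

theorem Dialogue.stmtAt_extend :
    (d.extend m).stmtAt k = if k = nextPos d then some m.statement else d.stmtAt k := by
  unfold Dialogue.stmtAt Dialogue.extend nextPos
  simp only [List.getElem?_append_singleton]
  split_ifs <;> first | rfl | omega

theorem Dialogue.moveAt_extend_of_lt (h : k < nextPos d) : (d.extend m).moveAt k = d.moveAt k := by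
  rw [Dialogue.moveAt_extend, if_neg h.ne]

theorem Dialogue.stmtAt_extend_of_lt (h : k < nextPos d) : (d.extend m).stmtAt k = d.stmtAt k := by
  rw [Dialogue.stmtAt_extend, if_neg h.ne]

@[simp]
theorem Dialogue.moveAt_extend_nextPos : (d.extend m).moveAt (nextPos d) = some m := by
  simp [Dialogue.moveAt_extend]

@[simp]
theorem Dialogue.stmtAt_extend_nextPos : (d.extend m).stmtAt (nextPos d) = some m.statement := by
  simp [Dialogue.stmtAt_extend]

theorem isDefenseOf_extend : IsDefenseOf (d.extend m) j r ↔
    (j = nextPos d ∧ m.isAttack = false ∧ m.ref = r) ∨ IsDefenseOf d j r := by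
  unfold IsDefenseOf
  rw [Dialogue.moveAt_extend]
  split_ifs with hj
  · simp [hj, d.moveAt_eq_none le_rfl]
  · simp [hj]

theorem isAttackOn_extend : IsAttackOn (d.extend m) j r ↔
    (j = nextPos d ∧ m.isAttack = true ∧ m.ref = r) ∨ IsAttackOn d j r := by
  unfold IsAttackOn
  rw [Dialogue.moveAt_extend]
  split_ifs with hj
  · simp [hj, d.moveAt_eq_none le_rfl]
  · simp [hj]

theorem isAttackPos_extend : IsAttackPos (d.extend m) k ↔
    (k = nextPos d ∧ m.isAttack = true) ∨ IsAttackPos d k := by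
  unfold IsAttackPos
  rw [Dialogue.moveAt_extend]
  split_ifs with hk
  · simp [hk, d.moveAt_eq_none le_rfl]
  · simp [hk]

theorem isAttackPos_extend_of_lt (h : k < nextPos d) :
    IsAttackPos (d.extend m) k ↔ IsAttackPos d k := by
  rw [IsAttackPos, IsAttackPos, Dialogue.moveAt_extend_of_lt h]

theorem IsDefenseOf.lt_nextPos (h : IsDefenseOf d j r) : j < nextPos d := by
  obtain ⟨_, hm, -⟩ := h
  exact d.lt_nextPos_of_moveAt hm

theorem IsAttackOn.lt_nextPos (h : IsAttackOn d j r) : j < nextPos d := by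
  obtain ⟨_, hm, -⟩ := h
  exact d.lt_nextPos_of_moveAt hm

theorem IsAttackPos.lt_nextPos (h : IsAttackPos d k) : k < nextPos d := by
  obtain ⟨_, hm, -⟩ := h
  exact d.lt_nextPos_of_moveAt hm

theorem openAt_extend (hr : r < nextPos d) (hk : k ≤ nextPos d) :
    OpenAt (d.extend m) r k ↔ OpenAt d r k := by
  unfold OpenAt
  rw [isAttackPos_extend_of_lt hr]
  simp only [isDefenseOf_extend]
  constructor <;> rintro ⟨hA, hno⟩ <;>
    refine ⟨hA, fun ⟨j, hj, hdef⟩ => hno ⟨j, hj, ?_⟩⟩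
  · exact .inr hdef
  · exact hdef.resolve_left (by omega)

theorem openAt_extend_nextPos (hr : r < nextPos d) :
    OpenAt (d.extend m) r (nextPos d + 1) ↔
      OpenAt d r (nextPos d) ∧ ¬ (m.isAttack = false ∧ m.ref = r) := by
  unfold OpenAt
  rw [isAttackPos_extend_of_lt hr]
  simp only [isDefenseOf_extend]
  constructor
  · rintro ⟨hA, hno⟩
    exact ⟨⟨hA, fun ⟨j, hj, hdef⟩ => hno ⟨j, by omega, .inr hdef⟩⟩,
      fun hm => hno ⟨nextPos d, by omega, .inl ⟨rfl, hm⟩⟩⟩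
  · rintro ⟨⟨hA, hno⟩, hm⟩
    refine ⟨hA, fun ⟨j, hj, hdef⟩ => ?_⟩
    rcases hdef with ⟨-, hdef⟩ | hdef
    · exact hm hdef
    · exact hno ⟨j, hdef.lt_nextPos, hdef⟩

theorem ParticleOK.moveOK (hp : ParticleOK d) (h : d.moveAt k = some m) : MoveOK d k m := by
  unfold Dialogue.moveAt at h
  split_ifs at h with hk
  simpa [Nat.sub_add_cancel (Nat.pos_of_ne_zero hk)] using hp (k - 1) m h

theorem ParticleOK.ref_lt (hp : ParticleOK d) (h : d.moveAt k = some m) : m.ref < k :=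
  (hp.moveOK h).1

theorem ParticleOK.lt_of_isDefenseOf (hp : ParticleOK d) (h : IsDefenseOf d j r) : r < j := by
  obtain ⟨_, hm, -, rfl⟩ := h
  exact hp.ref_lt hm

theorem ParticleOK.lt_of_isAttackOn (hp : ParticleOK d) (h : IsAttackOn d j r) : r < j := by
  obtain ⟨_, hm, -, rfl⟩ := h
  exact hp.ref_lt hm

theorem MoveOK.extend (hp : ParticleOK d) (hn : n ≤ nextPos d) (h : MoveOK d n mm) :
    MoveOK (d.extend m) n mm := by
  obtain ⟨hlt, hpar, hatt, hdef⟩ := h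
  refine ⟨hlt, hpar, fun hA => ?_, fun hA => ?_⟩
  · rw [Dialogue.stmtAt_extend_of_lt (by omega)]
    exact hatt hA
  · obtain ⟨a, χ, hma, haA, hsa, hd⟩ := hdef hA
    refine ⟨a, χ, ?_, haA, ?_, hd⟩
    · rwa [Dialogue.moveAt_extend_of_lt (by omega)]
    · rwa [Dialogue.stmtAt_extend_of_lt ((hp.ref_lt hma).trans (by omega))]

theorem ParticleOK.extend (hp : ParticleOK d) (hm : MoveOK d (nextPos d) m) :
    ParticleOK (d.extend m) := by
  intro i mm h
  simp only [Dialogue.extend, List.getElem?_append_singleton] at h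
  split_ifs at h with hi
  · cases h
    subst hi
    exact hm.extend hp le_rfl
  · exact (hp i mm h).extend hp (by
      have := d.lt_nextPos_of_moveAt (k := i + 1) (by simpa [Dialogue.moveAt] using h)
      omega)

end Positions

section Replies

variable {d : Dialogue} {m : Move}

theorem D10prime.extend_of_not_pTurn (h : D10prime d) (ht : ¬ PTurn d) :
    D10prime (d.extend m) := by
  intro n p hn hs
  have hlt : n < nextPos d := by
    have := (d.extend m).lt_nextPos_of_stmtAt hs
    unfold PTurn at ht
    rw [nextPos_extend] at this
    omega
  rw [Dialogue.stmtAt_extend_of_lt hlt] at hs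
  obtain ⟨j, hj, hodd, hsj⟩ := h n p hn hs
  exact ⟨j, hj, hodd, by simpa only [Dialogue.stmtAt_extend_of_lt (hj.trans hlt)] using hsj⟩

theorem D11.extend_of_reply (hp : ParticleOK d) (hr : m.ref + 1 = nextPos d) (h : D11 d)
    (hA : m.isAttack = false → IsAttackPos d m.ref) : D11 (d.extend m) := by
  intro n r hdef
  rcases isDefenseOf_extend.mp hdef with ⟨rfl, hmA, rfl⟩ | hdef
  · refine ⟨⟨(isAttackPos_extend_of_lt (by omega)).mpr (hA hmA), ?_⟩, ?_⟩
    · rintro ⟨j, hj, hj'⟩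
      have := hp.lt_of_isDefenseOf ((isDefenseOf_extend.mp hj').resolve_left (by omega))
      omega
    · rintro ⟨r', _, _, _, _⟩
      omega
  · have hn := hdef.lt_nextPos
    obtain ⟨hopen, hlatest⟩ := h n r hdef
    refine ⟨(openAt_extend (hp.lt_of_isDefenseOf hdef |>.trans hn) hn.le).mpr hopen, ?_⟩
    rintro ⟨r', hr', hr'n, hpar, hopen'⟩
    exact hlatest ⟨r', hr', hr'n, hpar, (openAt_extend (hr'n.trans hn) hn.le).mp hopen'⟩

theorem D12.extend_of_reply (hp : ParticleOK d) (hr : m.ref + 1 = nextPos d) (h : D12 d) :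
    D12 (d.extend m) := by
  intro n₁ n₂ r h₁ h₂
  rcases isDefenseOf_extend.mp h₁ with ⟨rfl, -, rfl⟩ | h₁ <;>
    rcases isDefenseOf_extend.mp h₂ with ⟨rfl, -, hr₂⟩ | h₂
  · rfl
  · have := hp.lt_of_isDefenseOf h₂; have := h₂.lt_nextPos; omega
  · have := hp.lt_of_isDefenseOf h₁; have := h₁.lt_nextPos; omega
  · exact h n₁ n₂ r h₁ h₂

theorem D13.extend_of_reply (hp : ParticleOK d) (hr : m.ref + 1 = nextPos d) (h : D13 d) :
    D13 (d.extend m) := by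
  intro n₁ n₂ r hr₀ h₁ h₂
  rcases isAttackOn_extend.mp h₁ with ⟨rfl, -, rfl⟩ | h₁ <;>
    rcases isAttackOn_extend.mp h₂ with ⟨rfl, -, hr₂⟩ | h₂
  · rfl
  · have := hp.lt_of_isAttackOn h₂; have := h₂.lt_nextPos; omega
  · have := hp.lt_of_isAttackOn h₁; have := h₁.lt_nextPos; omega
  · exact h n₁ n₂ r hr₀ h₁ h₂

theorem ERule.extend_of_reply (hr : m.ref + 1 = nextPos d) (h : ERule d) : ERule (d.extend m) := by
  intro n mm hn hmm
  rw [Dialogue.moveAt_extend] at hmm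
  split_ifs at hmm with hn'
  · cases hmm
    omega
  · exact h n mm hn hmm

end Replies

theorem Legal.extend_of_reply {d : Dialogue} {m : Move} (hd : Legal rulesetEprime d)
    (ht : ¬ PTurn d) (hm : MoveOK d (nextPos d) m) (hr : m.ref + 1 = nextPos d) :
    LegalExt rulesetEprime d m := by
  obtain ⟨hp, h10, h11, h12, h13, hE⟩ := hd
  refine ⟨hp.extend hm, h10.extend_of_not_pTurn ht, h11.extend_of_reply hp hr fun hA => ?_,
    h12.extend_of_reply hp hr, h13.extend_of_reply hp hr, hE.extend_of_reply hr⟩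
  obtain ⟨a, -, hma, haA, -⟩ := hm.2.2.2 hA
  exact ⟨a, hma, haA⟩

def concessions (d : Dialogue) : Set Formula :=
  {χ | ∃ j, j % 2 = 1 ∧ d.stmtAt j = some (.form χ)}

def LastOpenOAttack (d : Dialogue) (r : ℕ) : Prop :=
  r % 2 = 1 ∧ OpenAt d r (nextPos d) ∧
    ∀ r', r' % 2 = 1 → OpenAt d r' (nextPos d) → r' ≤ r

def AttackGoalAt (d : Dialogue) (r : ℕ) (g : Formula) : Prop :=
  ∃ a χ, d.moveAt r = some a ∧ a.isAttack = true ∧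
    d.stmtAt a.ref = some (.form χ) ∧ attackGoal χ a.statement = some g

section Invariants

variable {d : Dialogue} {m : Move} {r : ℕ} {g : Formula}

theorem concessions_initial {φ : Formula} : concessions ⟨φ, []⟩ = ∅ := by
  ext χ
  simp only [concessions, Dialogue.stmtAt, Set.mem_ofPred_eq, Set.mem_empty_iff_false,
    iff_false, not_exists, not_and]
  intro j hj
  simp [show j ≠ 0 by omega]

theorem concessions_extend_of_pTurn (ht : PTurn d) : concessions (d.extend m) = concessions d := by
  ext χ
  simp only [concessions, Set.mem_ofPred_eq, Dialogue.stmtAt_extend]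
  refine exists_congr fun j => and_congr_right fun hj => ?_
  unfold PTurn at ht
  rw [if_neg (by omega)]

theorem concessions_extend_of_not_pTurn (ht : ¬ PTurn d) :
    concessions (d.extend m) = {χ | m.statement = .form χ} ∪ concessions d := by
  ext χ
  simp only [concessions, Set.mem_ofPred_eq, Set.mem_union, Dialogue.stmtAt_extend]
  unfold PTurn at ht
  constructor
  · rintro ⟨j, hj, hs⟩
    split_ifs at hs with hjn
    · exact .inl (Option.some.inj hs)
    · exact .inr ⟨j, hj, hs⟩
  · rintro (hs | ⟨j, hj, hs⟩)
    · exact ⟨nextPos d, by omega, by simp [hs]⟩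
    · exact ⟨j, hj, by rwa [if_neg (d.lt_nextPos_of_stmtAt hs).ne]⟩

theorem deriv_atom_of_D10prime (h : D10prime d) {n p : ℕ} (hn : n % 2 = 0)
    (hs : d.stmtAt n = some (.form (.atom p))) : StableDeriv (concessions d) (.atom p) := by
  obtain ⟨j, -, hj, hsj | hsj⟩ := h n p hn hs
  · exact .hyp ⟨j, hj, hsj⟩
  · exact .stab (.hyp ⟨j, hj, hsj⟩)

theorem AttackGoalAt.extend (hp : ParticleOK d) (h : AttackGoalAt d r g) :
    AttackGoalAt (d.extend m) r g := by
  obtain ⟨a, χ, hma, haA, hs, hg⟩ := h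
  have hr := d.lt_nextPos_of_moveAt hma
  refine ⟨a, χ, by rwa [Dialogue.moveAt_extend_of_lt hr], haA, ?_, hg⟩
  rwa [Dialogue.stmtAt_extend_of_lt ((hp.ref_lt hma).trans hr)]

theorem LastOpenOAttack.lt_nextPos (h : LastOpenOAttack d r) : r < nextPos d :=
  h.2.1.1.lt_nextPos

theorem lastOpenOAttack_extend_nextPos (hp : ParticleOK d) (ht : ¬ PTurn d)
    (hA : m.isAttack = true) : LastOpenOAttack (d.extend m) (nextPos d) := by
  unfold PTurn at ht
  refine ⟨by omega, ⟨⟨m, by simp, hA⟩, ?_⟩, fun r' _ hr' => ?_⟩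
  · rintro ⟨j, -, hj⟩
    rcases isDefenseOf_extend.mp hj with ⟨-, hmA, -⟩ | hj
    · simp [hA] at hmA
    · have := hp.lt_of_isDefenseOf hj; have := hj.lt_nextPos; omega
  · have := hr'.1.lt_nextPos
    rw [nextPos_extend] at this
    omega

theorem LastOpenOAttack.extend (h : LastOpenOAttack d r)
    (hdef : ¬ (m.isAttack = false ∧ m.ref = r)) (hA : m.isAttack = true → PTurn d) :
    LastOpenOAttack (d.extend m) r := by
  have hrn := h.lt_nextPos
  obtain ⟨hr, hopen, hlatest⟩ := h
  refine ⟨hr, ?_, fun r' hr' hopen' => ?_⟩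
  · rw [nextPos_extend, openAt_extend_nextPos hrn]
    exact ⟨hopen, hdef⟩
  · have hr'n : r' < nextPos d := by
      rcases isAttackPos_extend.mp hopen'.1 with ⟨rfl, hmA⟩ | hr'
      · unfold PTurn at hA
        have := hA hmA
        omega
      · exact hr'.lt_nextPos
    rw [nextPos_extend, openAt_extend_nextPos hr'n] at hopen'
    exact hlatest r' hr' hopen'.1

theorem LastOpenOAttack.eq_ref_of_defense (h : LastOpenOAttack d r) (h11 : D11 (d.extend m))
    (hD : m.isAttack = false) (hodd : m.ref % 2 = 1) : m.ref = r := by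
  have hrn := h.lt_nextPos
  obtain ⟨hr, hopen, hlatest⟩ := h
  obtain ⟨hopen', hnewer⟩ := h11 (nextPos d) m.ref ⟨m, by simp, hD, rfl⟩
  have hmn : m.ref < nextPos d := by
    rcases isAttackPos_extend.mp hopen'.1 with ⟨-, hmA⟩ | hm
    · simp [hD] at hmA
    · exact hm.lt_nextPos
  rcases lt_trichotomy m.ref r with hlt | heq | hgt
  · exact absurd ⟨r, hlt, hrn, by omega, (openAt_extend hrn le_rfl).mpr hopen⟩ hnewer
  · exact heq
  · have := hlatest m.ref hodd ((openAt_extend hmn le_rfl).mp hopen')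
    omega

end Invariants

def GoalsDerivable (d : Dialogue) : Prop :=
  Legal rulesetEprime d → ∀ r g, LastOpenOAttack d r → AttackGoalAt d r g →
    StableDeriv (concessions d) g

section Induction

variable {d : Dialogue} {m : Move} {r : ℕ} {g : Formula}

theorem deriv_of_pAssertion {ψ : Formula} (hd : Legal rulesetEprime d) (ht : ¬ PTurn d)
    (hψ : d.stmtAt (nextPos d - 1) = some (.form ψ))
    (ih : ∀ m, LegalExt rulesetEprime d m → GoalsDerivable (d.extend m)) :
    StableDeriv (concessions d) ψ := by
  have hlast : nextPos d - 1 < nextPos d := Nat.sub_one_lt (Nat.succ_ne_zero _)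
  unfold PTurn at ht
  refine .of_attackGoal (fun p hp => ?_) fun s g hs hg => ?_
  · subst hp
    exact deriv_atom_of_D10prime hd.2.1 (by omega) hψ
  · let att : Move := ⟨s, true, nextPos d - 1⟩
    have ha : LegalExt rulesetEprime d att := by
      refine hd.extend_of_reply ht ⟨?_, ?_, fun _ => ⟨ψ, hψ, hs⟩, nofun⟩ ?_ <;>
        dsimp only [att] <;> omega
    have hgoal : AttackGoalAt (d.extend att) (nextPos d) g :=
      ⟨att, ψ, by simp, rfl, by rwa [Dialogue.stmtAt_extend_of_lt hlast], hg⟩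
    have := ih att ha ha _ g (lastOpenOAttack_extend_nextPos hd.1 ht rfl) hgoal
    rwa [concessions_extend_of_not_pTurn ht] at this

theorem deriv_of_oDefense (hp : ParticleOK d) (ht : PTurn d)
    (hm : LegalExt rulesetEprime d m)
    (ih : ∀ m', LegalExt rulesetEprime (d.extend m) m' →
      GoalsDerivable ((d.extend m).extend m'))
    {χ b : Formula} (hχ : d.stmtAt m.ref = some (.form χ)) (hA : m.isAttack = true)
    (hdef : Defends χ m.statement (.form b)) (hr : LastOpenOAttack d r)
    (hg : AttackGoalAt d r g) : StableDeriv (insert b (concessions d)) g := by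
  have ht' : ¬ PTurn (d.extend m) := not_pTurn_extend.mpr ht
  have href : m.ref < nextPos d := (hm.1.moveOK (by simp)).1
  let o : Move := ⟨.form b, false, nextPos d⟩
  have ho : LegalExt rulesetEprime (d.extend m) o := by
    refine hm.extend_of_reply ht'
      ⟨?_, ?_, nofun, fun _ => ⟨m, χ, by simp [o], hA, ?_, hdef⟩⟩ ?_
    · simp [o, nextPos_extend]
    · simp only [o, nextPos_extend]
      omega
    · rwa [Dialogue.stmtAt_extend_of_lt href]
    · simp [o, nextPos_extend]
  have hr' : LastOpenOAttack ((d.extend m).extend o) r :=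
    ((hr.extend (by simp [hA]) fun _ => ht).extend (by simp [o, hr.lt_nextPos.ne']) nofun)
  have := ih o ho ho r g hr' ((hg.extend hp).extend hm.1)
  rw [concessions_extend_of_not_pTurn ht', concessions_extend_of_pTurn ht] at this
  simpa [o, Set.ofPred_eq_eq_singleton', Set.singleton_union] using this

theorem GoalsDerivable.of_pMove (ht : PTurn d) (hm : LegalExt rulesetEprime d m)
    (ih : ∀ m', LegalExt rulesetEprime (d.extend m) m' →
      GoalsDerivable ((d.extend m).extend m')) :
    GoalsDerivable d := by
  intro hd r g hr hg
  have hmo : MoveOK (d.extend m) (nextPos d) m := hm.1.moveOK (by simp)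
  have hodd : m.ref % 2 = 1 := by
    have := hmo.2.1
    unfold PTurn at ht
    omega
  have hassert : ∀ ψ, m.statement = .form ψ → StableDeriv (concessions d) ψ := by
    intro ψ hψ
    rw [← concessions_extend_of_pTurn ht (m := m)]
    refine deriv_of_pAssertion hm (not_pTurn_extend.mpr ht) ?_ ih
    simp [nextPos_extend, hψ]
  cases hA : m.isAttack with
  | true =>
    obtain ⟨χ, hχ, hs⟩ := hmo.2.2.1 hA
    rw [Dialogue.stmtAt_extend_of_lt hmo.1] at hχ
    exact .of_attack_on_mem ⟨m.ref, hodd, hχ⟩ hs hassert fun b hb =>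
      deriv_of_oDefense hd.1 ht hm ih hχ hA hb hr hg
  | false =>
    obtain ⟨a, χ, ha, -, hχ, hdef⟩ := hmo.2.2.2 hA
    obtain ⟨a', χ', ha', -, hχ', hg⟩ := hg
    rw [hr.eq_ref_of_defense hm.2.2.1 hA hodd, Dialogue.moveAt_extend_of_lt hr.lt_nextPos, ha']
      at ha
    cases ha
    rw [Dialogue.stmtAt_extend_of_lt ((hd.1.ref_lt ha').trans hr.lt_nextPos), hχ'] at hχ
    cases hχ
    exact .attackGoal_of_defends hdef hg hassert

theorem goalsDerivable_of_pWinning (h : PWinning rulesetEprime d) :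
    (PTurn d → GoalsDerivable d) ∧
      (¬ PTurn d → ∀ m, LegalExt rulesetEprime d m → GoalsDerivable (d.extend m)) := by
  induction h with
  | pMove d m ht hm _ _ ih =>
    exact ⟨fun _ => .of_pMove ht hm (ih.2 (not_pTurn_extend.mpr ht)),
      (· ht |>.elim)⟩
  | oMoves d ht _ ih => exact ⟨(ht · |>.elim), fun _ m hm => (ih m hm).1 (pTurn_extend.mpr ht)⟩

end Induction

/-- (Soundness for stable logic) If φ is E′-valid, then φ belongs to stable
logic. -/
theorem Eprime_sound_for_stable (φ : Formula)
    (h : valid rulesetEprime φ) : StableProv φ := by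
  obtain ⟨hd, hw⟩ := h
  have ht : ¬ PTurn (⟨φ, []⟩ : Dialogue) := by simp [PTurn, nextPos]
  have hφ := deriv_of_pAssertion hd ht rfl ((goalsDerivable_of_pWinning hw).2 ht)
  rw [concessions_initial] at hφ
  exact hφ.stableProv_of_empty

end LorenzenDialogues
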